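/- Let F(y) = max_{0 ≤ k ≤ N} |e^{A_k} y - x_k| attain its minimum at y₀, and let D = {k : |e^{A_k} y₀ - x_k| = F(y₀)}. If F(y₀) > 0, then the values e^{A_k} y₀ - x_k for k ∈ D cannot all have the same sign: there exist k, n ∈ D with (e^{A_k} y₀ - x_k) = -(e^{A_n} y₀ - x_n). -/
import Mathlib


theorem stmt_6 (N : ℕ) (A x : Fin (N + 1) → ℝ)
    (F : ℝ → ℝ)
    (hF : ∀ y, F y = Finset.univ.sup' Finset.univ_nonempty
      (fun k : Fin (N + 1) => |Real.exp (A k) * y - x k|))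
    (y₀ : ℝ) (hmin : ∀ y : ℝ, F y₀ ≤ F y) (hpos : 0 < F y₀)
    (D : Set (Fin (N + 1))) (hD : D = {k | |Real.exp (A k) * y₀ - x k| = F y₀}) :
    ∃ k ∈ D, ∃ n ∈ D,
      Real.exp (A k) * y₀ - x k = -(Real.exp (A n) * y₀ - x n) ∧
      Real.exp (A k) * y₀ - x k ≠ 0 := by
  by_contra hcon
  push_neg at hcon
  set M := F y₀ with hM
  have habs : ∀ k, |Real.exp (A k) * y₀ - x k| ≤ M := by
    intro k
    have h := Finset.le_sup' (fun k : Fin (N + 1) => |Real.exp (A k) * y₀ - x k|)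
      (Finset.mem_univ k)
    rw [← hF] at h
    exact h
  obtain ⟨k₀, -, hk₀⟩ := Finset.exists_mem_eq_sup' (Finset.univ_nonempty)
    (fun k : Fin (N + 1) => |Real.exp (A k) * y₀ - x k|)
  have hk₀' : |Real.exp (A k₀) * y₀ - x k₀| = M := by
    rw [hM, hF]; exact hk₀.symm
  have hk₀D : k₀ ∈ D := by rw [hD]; exact hk₀'
  set c := Real.exp (A k₀) * y₀ - x k₀ with hc
  have hcabs : |c| = M := hk₀'
  have hall : ∀ k ∈ D, Real.exp (A k) * y₀ - x k = c := by
    intro k hk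
    have h1 : |Real.exp (A k) * y₀ - x k| = M := by rw [hD] at hk; exact hk
    have h2 : Real.exp (A k) * y₀ - x k = c ∨ Real.exp (A k) * y₀ - x k = -c :=
      abs_eq_abs.mp (by rw [h1, hcabs])
    rcases h2 with h | h
    · exact h
    · exfalso
      have h3 := hcon k hk k₀ hk₀D h
      rw [h3] at h1
      simp at h1
      linarith
  set b : Fin (N + 1) → ℝ := fun k =>
    if |Real.exp (A k) * y₀ - x k| = M then M / Real.exp (A k)
    else (M - |Real.exp (A k) * y₀ - x k|) / Real.exp (A k) with hb
  have hbpos : ∀ k, 0 < b k := by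
    intro k
    rw [hb]
    dsimp only
    split_ifs with h
    · exact div_pos hpos (Real.exp_pos _)
    · exact div_pos (by cases lt_or_eq_of_le (habs k) with
        | inl h' => linarith
        | inr h' => exact absurd h' h) (Real.exp_pos _)
  set ε := (Finset.univ.inf' Finset.univ_nonempty b) / 2 with hε
  have hεpos : 0 < ε := by
    have h : 0 < Finset.univ.inf' Finset.univ_nonempty b := by
      rw [Finset.lt_inf'_iff]
      intro k _
      exact hbpos k
    rw [hε]; linarith
  have hεle : ∀ k, ε ≤ b k / 2 := by
    intro k
    have h := Finset.inf'_le b (Finset.mem_univ k)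
    rw [hε]; linarith
  have key : F (y₀ - ε * (c / M)) < M := by
    rw [hF, Finset.sup'_lt_iff]
    intro k _
    have hres : Real.exp (A k) * (y₀ - ε * (c / M)) - x k
        = (Real.exp (A k) * y₀ - x k) - ε * (c / M) * Real.exp (A k) := by ring
    rw [hres]
    have hcm : |c / M| = 1 := by
      rw [abs_div, hcabs, abs_of_pos hpos, div_self (ne_of_gt hpos)]
    by_cases hkD : |Real.exp (A k) * y₀ - x k| = M
    · have hk : Real.exp (A k) * y₀ - x k = c := hall k (by rw [hD]; exact hkD)
      rw [hk]
      have h1 : c - ε * (c / M) * Real.exp (A k)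
          = (c / M) * (M - ε * Real.exp (A k)) := by
        field_simp
      rw [h1, abs_mul, hcm, one_mul]
      have hbk : b k = M / Real.exp (A k) := by rw [hb]; simp [hkD]
      have h3 : ε * Real.exp (A k) ≤ M / 2 := by
        have h4 := hεle k
        rw [hbk] at h4
        have h5 := Real.exp_pos (A k)
        rw [div_div] at h4
        calc ε * Real.exp (A k) ≤ (M / (Real.exp (A k) * 2)) * Real.exp (A k) := by
              exact mul_le_mul_of_nonneg_right h4 (le_of_lt h5)
          _ = M / 2 := by field_simp
      rw [abs_lt]
      constructor
      · nlinarith [mul_pos hεpos (Real.exp_pos (A k))]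
      · nlinarith [mul_pos hεpos (Real.exp_pos (A k))]
    · have hlt : |Real.exp (A k) * y₀ - x k| < M := lt_of_le_of_ne (habs k) hkD
      have hbk : b k = (M - |Real.exp (A k) * y₀ - x k|) / Real.exp (A k) := by
        rw [hb]; simp [hkD]
      have h3 : ε * Real.exp (A k) ≤ (M - |Real.exp (A k) * y₀ - x k|) / 2 := by
        have h4 := hεle k
        rw [hbk] at h4
        have h5 := Real.exp_pos (A k)
        rw [div_div] at h4
        calc ε * Real.exp (A k)
            ≤ ((M - |Real.exp (A k) * y₀ - x k|) / (Real.exp (A k) * 2)) * Real.exp (A k) := by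
              exact mul_le_mul_of_nonneg_right h4 (le_of_lt h5)
          _ = (M - |Real.exp (A k) * y₀ - x k|) / 2 := by field_simp
      calc |(Real.exp (A k) * y₀ - x k) - ε * (c / M) * Real.exp (A k)|
          ≤ |Real.exp (A k) * y₀ - x k| + |ε * (c / M) * Real.exp (A k)| := abs_sub _ _
        _ = |Real.exp (A k) * y₀ - x k| + ε * Real.exp (A k) := by
            rw [abs_mul, abs_mul, hcm, abs_of_pos hεpos, mul_one,
              abs_of_pos (Real.exp_pos (A k))]
        _ < M := by linarith
  have h := hmin (y₀ - ε * (c / M))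
  linarith
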